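/- A compact Hausdorff space X is hereditarily indecomposable if and only if whenever four closed sets C, D, F, G in X are given with C ∩ D = C ∩ F = D ∩ G = ∅, one can write X as the union of three closed sets X₀, X₁, X₂ such that C ⊆ X₀, D ⊆ X₂, X₀ ∩ X₁ ∩ G = ∅, X₀ ∩ X₂ = ∅, and X₁ ∩ X₂ ∩ F = ∅. -/

import Mathlib

open Set Topology Function

/-- A space is hereditarily indecomposable if whenever two subcontinua
(nonempty closed connected subsets) meet, one contains the other. -/
def HereditarilyIndecomposable (X : Type*) [TopologicalSpace X] : Prop :=
  ∀ A B : Set X, IsClosed A → IsConnected A → IsClosed B → IsConnected B →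
    (A ∩ B).Nonempty → A ⊆ B ∨ B ⊆ A

/-!
If `X` is hereditarily indecomposable, a component of `G` through `C` and a component of `F`
through `D` cannot meet: one would contain the other, forcing `C ∩ F` or `D ∩ G` to be nonempty.
In a compact Hausdorff space components are quasi-components, so this disjointness can be
upgraded to relatively clopen pieces `C ∩ G ⊆ Γ ⊆ G` and `D ∩ F ⊆ Φ ⊆ F` with `Γ ∩ Φ = ∅`, and
normality turns `C ∪ Γ` and `D ∪ Φ` into the closures `X₀`, `X₂` of two neighbourhoods, with
`X₁` the gap between them. Conversely, a chicane for `({a}, {b}, B, A)` with `a ∈ A \ B`,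
`b ∈ B \ A` traps the continuum `A` in `X₀` and `B` in `X₂`, so `A` and `B` cannot meet.
-/

section

variable {X : Type*} [TopologicalSpace X]

def IsChicane (C D F G X₀ X₁ X₂ : Set X) : Prop :=
  IsClosed X₀ ∧ IsClosed X₁ ∧ IsClosed X₂ ∧ X₀ ∪ X₁ ∪ X₂ = univ ∧ C ⊆ X₀ ∧ D ⊆ X₂ ∧
    X₀ ∩ X₁ ∩ G = ∅ ∧ X₀ ∩ X₂ = ∅ ∧ X₁ ∩ X₂ ∩ F = ∅

theorem IsPreconnected.subset_left_of_subset_union_of_isClosed {s u v : Set X}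
    (hu : IsClosed u) (hv : IsClosed v) (hsuv : s ⊆ u ∪ v) (huv : s ∩ (u ∩ v) = ∅)
    (hsu : (s ∩ u).Nonempty) (hs : IsPreconnected s) : s ⊆ u := by
  refine (isPreconnected_iff_subset_of_disjoint_closed.1 hs u v hu hv hsuv huv).resolve_right ?_
  obtain ⟨x, hxs, hxu⟩ := hsu
  exact fun hsv => (huv ▸ ⟨hxs, hxu, hsv hxs⟩ : x ∈ (∅ : Set X))

namespace IsChicane

variable {C D F G X₀ X₁ X₂ : Set X}

theorem subset_left (h : IsChicane C D F G X₀ X₁ X₂) (hG : IsPreconnected G)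
    (hCG : (C ∩ G).Nonempty) : G ⊆ X₀ := by
  obtain ⟨h₀, h₁, h₂, hcov, hC, -, h₀₁, h₀₂, -⟩ := h
  refine hG.subset_left_of_subset_union_of_isClosed h₀ (h₁.union h₂)
    (fun x _ => union_assoc X₀ X₁ X₂ ▸ eq_univ_iff_forall.1 hcov x) ?_ ?_
  · refine eq_empty_iff_forall_notMem.2 ?_
    rintro x ⟨hxG, hx₀, hx₁ | hx₂⟩
    exacts [h₀₁.subset ⟨⟨hx₀, hx₁⟩, hxG⟩, h₀₂.subset ⟨hx₀, hx₂⟩]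
  · obtain ⟨x, hxC, hxG⟩ := hCG
    exact ⟨x, hxG, hC hxC⟩

theorem subset_right (h : IsChicane C D F G X₀ X₁ X₂) (hF : IsPreconnected F)
    (hDF : (D ∩ F).Nonempty) : F ⊆ X₂ := by
  obtain ⟨h₀, h₁, h₂, hcov, -, hD, -, h₀₂, h₁₂⟩ := h
  refine hF.subset_left_of_subset_union_of_isClosed h₂ (h₀.union h₁)
    (fun x _ => union_comm (X₀ ∪ X₁) X₂ ▸ eq_univ_iff_forall.1 hcov x) ?_ ?_
  · refine eq_empty_iff_forall_notMem.2 ?_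
    rintro x ⟨hxF, hx₂, hx₀ | hx₁⟩
    exacts [h₀₂.subset ⟨hx₀, hx₂⟩, h₁₂.subset ⟨⟨hx₁, hx₂⟩, hxF⟩]
  · obtain ⟨x, hxD, hxF⟩ := hDF
    exact ⟨x, hxF, hD hxD⟩

theorem disjoint (h : IsChicane C D F G X₀ X₁ X₂) (hG : IsPreconnected G) (hF : IsPreconnected F)
    (hCG : (C ∩ G).Nonempty) (hDF : (D ∩ F).Nonempty) : Disjoint G F := by
  have hG₀ := h.subset_left hG hCG
  have hF₂ := h.subset_right hF hDF
  obtain ⟨-, -, -, -, -, -, -, h₀₂, -⟩ := h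
  exact (disjoint_iff_inter_eq_empty.2 h₀₂).mono hG₀ hF₂

end IsChicane

theorem HereditarilyIndecomposable.of_forall_exists_isChicane [T1Space X]
    (h : ∀ C D F G : Set X, IsClosed C → IsClosed D → IsClosed F → IsClosed G →
      C ∩ D = ∅ → C ∩ F = ∅ → D ∩ G = ∅ → ∃ X₀ X₁ X₂, IsChicane C D F G X₀ X₁ X₂) :
    HereditarilyIndecomposable X := by
  intro A B hA hAc hB hBc hAB
  by_contra! hne
  obtain ⟨a, haA, haB⟩ := not_subset.1 hne.1
  obtain ⟨b, hbB, hbA⟩ := not_subset.1 hne.2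
  obtain ⟨X₀, X₁, X₂, hch⟩ := h {a} {b} B A isClosed_singleton isClosed_singleton hB hA
    (singleton_inter_eq_empty.2 fun hab => haB (mem_singleton_iff.1 hab ▸ hbB))
    (singleton_inter_eq_empty.2 haB) (singleton_inter_eq_empty.2 hbA)
  exact hAB.not_disjoint
    (hch.disjoint hAc.isPreconnected hBc.isPreconnected ⟨a, rfl, haA⟩ ⟨b, rfl, hbB⟩)

theorem IsClosed.connectedComponentIn {F : Set X} (hF : IsClosed F) (x : X) :
    IsClosed (connectedComponentIn F x) := by
  by_cases hx : x ∈ F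
  · rw [connectedComponentIn_eq_image hx]
    exact hF.isClosedMap_subtype_val _ isClosed_connectedComponent
  · rw [connectedComponentIn_eq_empty hx]
    exact isClosed_empty

theorem HereditarilyIndecomposable.disjoint_biUnion_connectedComponentIn
    (hX : HereditarilyIndecomposable X) {C D F G : Set X} (hF : IsClosed F) (hG : IsClosed G)
    (hCF : Disjoint C F) (hDG : Disjoint D G) :
    Disjoint (⋃ c ∈ C, connectedComponentIn G c) (⋃ d ∈ D, connectedComponentIn F d) := by
  refine disjoint_iUnion₂_left.2 fun c hc => disjoint_iUnion₂_right.2 fun d hd => ?_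
  by_contra hKL
  obtain ⟨x, hxK, hxL⟩ := not_disjoint_iff_nonempty_inter.1 hKL
  have hcG : c ∈ G := connectedComponentIn_nonempty_iff.1 ⟨x, hxK⟩
  have hdF : d ∈ F := connectedComponentIn_nonempty_iff.1 ⟨x, hxL⟩
  rcases hX _ _ (hG.connectedComponentIn c) (isConnected_connectedComponentIn_iff.2 hcG)
      (hF.connectedComponentIn d) (isConnected_connectedComponentIn_iff.2 hdF) ⟨x, hxK, hxL⟩
    with hKL | hLK
  · exact disjoint_left.1 hCF hc
      (connectedComponentIn_subset F d (hKL (mem_connectedComponentIn hcG)))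
  · exact disjoint_left.1 hDG hd
      (connectedComponentIn_subset G c (hLK (mem_connectedComponentIn hdF)))

theorem biUnion_connectedComponentIn_eq_image (E P : Set X) :
    ⋃ p ∈ P, connectedComponentIn E p =
      (↑) '' (ConnectedComponents.mk ⁻¹' (ConnectedComponents.mk '' ((↑) ⁻¹' P : Set E))) := by
  ext x
  simp only [mem_iUnion₂, mem_image, mem_preimage, ConnectedComponents.coe_eq_coe]
  constructor
  · rintro ⟨p, hpP, hx⟩
    have hpE : p ∈ E := connectedComponentIn_nonempty_iff.1 ⟨x, hx⟩
    rw [connectedComponentIn_eq_image hpE] at hx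
    obtain ⟨y, hy, rfl⟩ := hx
    exact ⟨y, ⟨⟨p, hpE⟩, hpP, connectedComponent_eq hy⟩, rfl⟩
  · rintro ⟨y, ⟨p, hpP, hpy⟩, rfl⟩
    refine ⟨p, hpP, ?_⟩
    rw [connectedComponentIn_eq_image p.2]
    exact ⟨y, hpy ▸ mem_connectedComponent, rfl⟩

theorem exists_isClopen_of_disjoint_image_connectedComponentsMk [CompactSpace X] [T2Space X]
    {P T : Set X} (hP : IsClosed P) (hT : IsClosed T)
    (h : Disjoint (ConnectedComponents.mk '' P) (ConnectedComponents.mk '' T)) :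
    ∃ U, IsClopen U ∧ P ⊆ U ∧ Disjoint U T := by
  have hcl {S : Set X} (hS : IsClosed S) : IsClosed (ConnectedComponents.mk '' S) :=
    (hS.isCompact.image ConnectedComponents.continuous_coe).isClosed
  obtain ⟨K, hK, hPK, hKT⟩ := exists_clopen_of_closed_subset_open (hcl hP) (hcl hT).isOpen_compl
    (subset_compl_iff_disjoint_right.2 h)
  exact ⟨_, hK.preimage ConnectedComponents.continuous_coe, image_subset_iff.1 hPK,
    disjoint_left.2 fun x hxK hxT => hKT hxK (mem_image_of_mem _ hxT)⟩

theorem exists_isChicane_of_relClopen [NormalSpace X] {C D F G Γ Φ : Set X}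
    (hC : IsClosed C) (hD : IsClosed D) (hΓ : IsClosed Γ) (hΦ : IsClosed Φ)
    (hGΓ : IsClosed (G \ Γ)) (hFΦ : IsClosed (F \ Φ)) (hCΓ : C ∩ G ⊆ Γ) (hDΦ : D ∩ F ⊆ Φ)
    (hdisj : Disjoint (C ∪ Γ) (D ∪ Φ)) : ∃ X₀ X₁ X₂, IsChicane C D F G X₀ X₁ X₂ := by
  obtain ⟨W, hW, hCΓW, hWcl⟩ := normal_exists_closure_subset (hC.union hΓ)
    ((hD.union hΦ).union hGΓ).isOpen_compl <| subset_compl_iff_disjoint_right.2 <|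
      disjoint_union_right.2 ⟨hdisj, disjoint_left.2 fun x hx ⟨hxG, hxΓ⟩ =>
        hxΓ (hx.elim (fun hxC => hCΓ ⟨hxC, hxG⟩) id)⟩
  obtain ⟨V, hV, hDΦV, hVcl⟩ := normal_exists_closure_subset (hD.union hΦ)
    (isClosed_closure.union hFΦ).isOpen_compl <| subset_compl_iff_disjoint_right.2 <|
      disjoint_union_right.2 ⟨disjoint_left.2 fun x hx hxW => hWcl hxW (.inl hx),
        disjoint_left.2 fun x hx ⟨hxF, hxΦ⟩ => hxΦ (hx.elim (fun hxD => hDΦ ⟨hxD, hxF⟩) id)⟩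
  refine ⟨closure W, (W ∪ V)ᶜ, closure V, isClosed_closure, (hW.union hV).isClosed_compl,
    isClosed_closure, ?_, fun x hx => subset_closure (hCΓW (.inl hx)),
    fun x hx => subset_closure (hDΦV (.inl hx)), ?_, ?_, ?_⟩
  · refine eq_univ_of_forall fun x => ?_
    by_cases hx : x ∈ W ∪ V
    · exact hx.elim (fun h => .inl (.inl (subset_closure h))) (fun h => .inr (subset_closure h))
    · exact .inl (.inr hx)
  · -- a point of `closure W ∩ G` outside `G \ Γ` lies in `Γ ⊆ W`
    refine eq_empty_iff_forall_notMem.2 fun x ⟨⟨hxW, hxWV⟩, hxG⟩ => hxWV (.inl (hCΓW (.inr ?_)))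
    by_contra hxΓ
    exact hWcl hxW (.inr ⟨hxG, hxΓ⟩)
  · exact eq_empty_iff_forall_notMem.2 fun x ⟨hxW, hxV⟩ => hVcl hxV (.inl hxW)
  · refine eq_empty_iff_forall_notMem.2 fun x ⟨⟨hxWV, hxV⟩, hxF⟩ => hxWV (.inr (hDΦV (.inr ?_)))
    by_contra hxΦ
    exact hVcl hxV (.inr ⟨hxF, hxΦ⟩)

section CompactT2

variable [CompactSpace X] [T2Space X] {E P : Set X}

theorem isClosed_biUnion_connectedComponentIn (hE : IsClosed E) (hP : IsClosed P) :
    IsClosed (⋃ p ∈ P, connectedComponentIn E p) := by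
  have := isCompact_iff_compactSpace.1 hE.isCompact
  rw [biUnion_connectedComponentIn_eq_image]
  exact hE.isClosedMap_subtype_val _ <| ((hP.preimage continuous_subtype_val).isCompact.image
    ConnectedComponents.continuous_coe).isClosed.preimage ConnectedComponents.continuous_coe

theorem exists_relClopen_of_disjoint_biUnion_connectedComponentIn {T : Set X} (hE : IsClosed E)
    (hP : IsClosed P) (hT : IsClosed T) (h : Disjoint (⋃ p ∈ P, connectedComponentIn E p) T) :
    ∃ Γ ⊆ E, IsClosed Γ ∧ IsClosed (E \ Γ) ∧ P ∩ E ⊆ Γ ∧ Disjoint Γ T := by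
  have := isCompact_iff_compactSpace.1 hE.isCompact
  rw [biUnion_connectedComponentIn_eq_image] at h
  obtain ⟨U, hU, hPU, hUT⟩ := exists_isClopen_of_disjoint_image_connectedComponentsMk
    (hP.preimage continuous_subtype_val) (hT.preimage continuous_subtype_val) <|
      disjoint_left.2 fun _ ⟨p, hpP, hp⟩ ⟨t, htT, ht⟩ =>
        disjoint_left.1 h ⟨t, ⟨p, hpP, hp.trans ht.symm⟩, rfl⟩ htT
  refine ⟨(↑) '' U, Subtype.coe_image_subset E U, hE.isClosedMap_subtype_val _ hU.isClosed, ?_,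
    fun x ⟨hxP, hxE⟩ => ⟨⟨x, hxE⟩, hPU hxP, rfl⟩, ?_⟩
  · rw [← image_val_compl]
    exact hE.isClosedMap_subtype_val _ hU.compl.isClosed
  · refine disjoint_left.2 ?_
    rintro _ ⟨y, hyU, rfl⟩ hyT
    exact disjoint_left.1 hUT hyU hyT

theorem HereditarilyIndecomposable.exists_isChicane (hX : HereditarilyIndecomposable X)
    {C D F G : Set X} (hC : IsClosed C) (hD : IsClosed D) (hF : IsClosed F) (hG : IsClosed G)
    (hCD : Disjoint C D) (hCF : Disjoint C F) (hDG : Disjoint D G) :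
    ∃ X₀ X₁ X₂, IsChicane C D F G X₀ X₁ X₂ := by
  obtain ⟨Φ, hΦF, hΦ, hFΦ, hDΦ, hΦC⟩ := exists_relClopen_of_disjoint_biUnion_connectedComponentIn
    hF hD (isClosed_biUnion_connectedComponentIn hG hC)
    (hX.disjoint_biUnion_connectedComponentIn hF hG hCF hDG).symm
  obtain ⟨Γ, hΓG, hΓ, hGΓ, hCΓ, hΓΦ⟩ :=
    exists_relClopen_of_disjoint_biUnion_connectedComponentIn hG hC hΦ hΦC.symm
  refine exists_isChicane_of_relClopen hC hD hΓ hΦ hGΓ hFΦ hCΓ hDΦ ?_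
  exact disjoint_union_left.2 ⟨disjoint_union_right.2 ⟨hCD, hCF.mono_right hΦF⟩,
    disjoint_union_right.2 ⟨hDG.symm.mono_left hΓG, hΓΦ⟩⟩

end CompactT2

end

/-- A compact Hausdorff space `X` is hereditarily indecomposable iff every pliand
foursome `(C,D,F,G)` of closed sets (i.e. with `C ∩ D = C ∩ F = D ∩ G = ∅`) admits a
chicane: closed sets `X₀, X₁, X₂` covering `X` with `C ⊆ X₀`, `D ⊆ X₂`,
`X₀ ∩ X₁ ∩ G = ∅`, `X₀ ∩ X₂ = ∅` and `X₁ ∩ X₂ ∩ F = ∅`. -/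
theorem hereditarilyIndecomposable_iff_chicane
    (X : Type*) [TopologicalSpace X] [CompactSpace X] [T2Space X] :
    HereditarilyIndecomposable X ↔
      ∀ C D F G : Set X, IsClosed C → IsClosed D → IsClosed F → IsClosed G →
        C ∩ D = ∅ → C ∩ F = ∅ → D ∩ G = ∅ →
        ∃ X₀ X₁ X₂ : Set X,
          IsClosed X₀ ∧ IsClosed X₁ ∧ IsClosed X₂ ∧
          X₀ ∪ X₁ ∪ X₂ = Set.univ ∧
          C ⊆ X₀ ∧ D ⊆ X₂ ∧
          X₀ ∩ X₁ ∩ G = ∅ ∧ X₀ ∩ X₂ = ∅ ∧ X₁ ∩ X₂ ∩ F = ∅ :=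
  ⟨fun hX _ _ _ _ hC hD hF hG hCD hCF hDG => hX.exists_isChicane hC hD hF hG
      (disjoint_iff_inter_eq_empty.2 hCD) (disjoint_iff_inter_eq_empty.2 hCF)
      (disjoint_iff_inter_eq_empty.2 hDG),
    HereditarilyIndecomposable.of_forall_exists_isChicane⟩
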